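/- arXiv:2409.12710 — 2 statements merged into one kernel-verified Lean document; each statement's English description precedes it below -/
import Mathlib

section
/- Let Y_1, …, Y_N be independent and identically distributed exponential random variables with rate parameter μ > 0. Then for every t ≥ 0, P(Σ_{j=1}^N Y_j ≤ t) ≤ (e·t·μ/N)^N. -/
/-!
Chernoff's bound for the lower tail: for `s > 0`,
`P(∑ Yⱼ ≤ t) ≤ e^{st} E[e^{-s ∑ Yⱼ}] = e^{st} (r / (r + s))^N ≤ e^{st} (r / s)^N`,
and `s = N / t` turns the right-hand side into `(e t r / N)^N`. For `t = 0` the event is null,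
since exponential variables are almost surely positive.
-/

open MeasureTheory ProbabilityTheory Real Set

namespace ProbabilityTheory

variable {r v : ℝ}

lemma expMeasure_eq_withDensity (r : ℝ) :
    expMeasure r = volume.withDensity fun x ↦ ENNReal.ofReal (exponentialPDFReal r x) := rfl

lemma exponentialPDFReal_mul_exp_mul (r v x : ℝ) :
    exponentialPDFReal r x * exp (v * x)
      = (Ici 0).indicator (fun x ↦ r * exp ((v - r) * x)) x := by
  by_cases hx : 0 ≤ x
  · rw [indicator_of_mem (mem_Ici.2 hx), sub_mul, sub_eq_neg_add, exp_add, ← mul_assoc]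
    simp [exponentialPDFReal, gammaPDFReal, hx]
  · simp [exponentialPDFReal, gammaPDFReal, hx]

lemma integrable_exp_mul_expMeasure (hr : 0 < r) (hv : v < r) :
    Integrable (fun x ↦ exp (v * x)) (expMeasure r) := by
  rw [expMeasure_eq_withDensity, integrable_withDensity_iff_integrable_smul'
    (by fun_prop) (.of_forall fun _ ↦ ENNReal.ofReal_lt_top)]
  simp_rw [ENNReal.toReal_ofReal (exponentialPDFReal_nonneg hr _), smul_eq_mul,
    exponentialPDFReal_mul_exp_mul]
  rw [integrable_indicator_iff measurableSet_Ici, integrableOn_Ici_iff_integrableOn_Ioi]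
  exact (integrableOn_exp_mul_Ioi (sub_neg.2 hv) 0).const_mul r

lemma mgf_id_expMeasure (hr : 0 < r) (hv : v < r) : mgf id (expMeasure r) v = r / (r - v) := by
  rw [mgf, expMeasure_eq_withDensity, integral_withDensity_eq_integral_toReal_smul
    (by fun_prop) (.of_forall fun _ ↦ ENNReal.ofReal_lt_top)]
  simp_rw [ENNReal.toReal_ofReal (exponentialPDFReal_nonneg hr _), id, smul_eq_mul,
    exponentialPDFReal_mul_exp_mul]
  rw [integral_indicator measurableSet_Ici, integral_Ici_eq_integral_Ioi, integral_const_mul,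
    integral_exp_mul_Ioi (sub_neg.2 hv), mul_zero, exp_zero, ← neg_sub r v, div_neg, neg_div,
    neg_neg, mul_one_div]

lemma expMeasure_Iic_zero (hr : 0 < r) : expMeasure r (Iic 0) = 0 := by
  have := isProbabilityMeasure_expMeasure hr
  rw [← measureReal_eq_zero_iff, ← cdf_eq_real, cdf_expMeasure_eq hr]
  simp

variable {Ω ι : Type*} [MeasurableSpace Ω] {P : Measure Ω} {X : Ω → ℝ}

lemma integrable_exp_mul_of_map_eq_expMeasure (hX : AEMeasurable X P)
    (hXr : P.map X = expMeasure r) (hr : 0 < r) (hv : v < r) :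
    Integrable (fun ω ↦ exp (v * X ω)) P := by
  have h := integrable_exp_mul_expMeasure hr hv
  rw [← hXr] at h
  exact h.comp_aemeasurable hX

lemma mgf_of_map_eq_expMeasure (hX : AEMeasurable X P) (hXr : P.map X = expMeasure r)
    (hr : 0 < r) (hv : v < r) : mgf X P v = r / (r - v) := by
  rw [← mgf_id_map hX, hXr, mgf_id_expMeasure hr hv]

lemma measure_nonpos_eq_zero_of_map_eq_expMeasure (hX : AEMeasurable X P)
    (hXr : P.map X = expMeasure r) (hr : 0 < r) : P {ω | X ω ≤ 0} = 0 := by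
  rw [← expMeasure_Iic_zero hr, ← hXr, Measure.map_apply_of_aemeasurable hX measurableSet_Iic]
  rfl

variable [Fintype ι] {Y : ι → Ω → ℝ}

lemma measure_sum_nonpos_eq_zero_of_map_eq_expMeasure [Nonempty ι]
    (hmeas : ∀ j, AEMeasurable (Y j) P) (hdist : ∀ j, P.map (Y j) = expMeasure r) (hr : 0 < r) :
    P {ω | ∑ j, Y j ω ≤ 0} = 0 := by
  refine measure_mono_null (fun ω hω ↦ ?_) (measure_iUnion_null fun j ↦
    measure_nonpos_eq_zero_of_map_eq_expMeasure (hmeas j) (hdist j) hr)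
  by_contra! hpos
  simp only [mem_iUnion, mem_ofPred_eq, not_exists, not_le] at hpos
  exact (Finset.sum_pos (fun j _ ↦ hpos j) Finset.univ_nonempty).not_ge hω

lemma measureReal_sum_le_le_exp_mul_of_map_eq_expMeasure (hmeas : ∀ j, Measurable (Y j))
    (hindep : iIndepFun Y P) (hdist : ∀ j, P.map (Y j) = expMeasure r) (hr : 0 < r)
    {s : ℝ} (hs : 0 ≤ s) (t : ℝ) :
    P.real {ω | ∑ j, Y j ω ≤ t} ≤ exp (s * t) * (r / (r + s)) ^ Fintype.card ι := by
  have := hindep.isProbabilityMeasure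
  have hsr : -s < r := by linarith
  have hmgf : mgf (∑ j, Y j) P (-s) = (r / (r + s)) ^ Fintype.card ι := by
    rw [hindep.mgf_sum hmeas, Finset.prod_eq_pow_card fun j _ ↦
      mgf_of_map_eq_expMeasure (hmeas j).aemeasurable (hdist j) hr hsr, sub_neg_eq_add,
      Finset.card_univ]
  calc P.real {ω | ∑ j, Y j ω ≤ t} = P.real {ω | (∑ j, Y j) ω ≤ t} := by simp
    _ ≤ exp (-(-s) * t) * mgf (∑ j, Y j) P (-s) :=
      measure_le_le_exp_mul_mgf t (by linarith) (hindep.integrable_exp_mul_sum hmeas fun j _ ↦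
        integrable_exp_mul_of_map_eq_expMeasure (hmeas j).aemeasurable (hdist j) hr hsr)
    _ = exp (s * t) * (r / (r + s)) ^ Fintype.card ι := by rw [hmgf, neg_neg]

end ProbabilityTheory

theorem exp_sum_small_ball_general
    {Ω : Type*} [MeasurableSpace Ω] (P : Measure Ω)
    (N : ℕ) (hN : 0 < N) (r : ℝ) (hr : 0 < r)
    (Y : Fin N → Ω → ℝ)
    (hmeas : ∀ j, Measurable (Y j))
    (hindep : iIndepFun Y P)
    (hdist : ∀ j, P.map (Y j) = expMeasure r)
    (t : ℝ) (ht : 0 ≤ t) :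
    (P {ω | ∑ j, Y j ω ≤ t}).toReal ≤ (Real.exp 1 * t * r / N) ^ N := by
  have hNpos : (0 : ℝ) < N := by exact_mod_cast hN
  rcases ht.eq_or_lt with rfl | htpos
  · have : Nonempty (Fin N) := ⟨⟨0, hN⟩⟩
    rw [measure_sum_nonpos_eq_zero_of_map_eq_expMeasure (fun j ↦ (hmeas j).aemeasurable) hdist hr,
      ENNReal.toReal_zero]
    positivity
  have hratio : r / (r + N / t) ≤ t * r / N := calc
    r / (r + N / t) ≤ r / (N / t) := by gcongr; linarith
    _ = t * r / N := by field_simp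
  have hchernoff := measureReal_sum_le_le_exp_mul_of_map_eq_expMeasure hmeas hindep hdist hr
    (s := (N : ℝ) / t) (by positivity) t
  rw [Fintype.card_fin] at hchernoff
  calc (P {ω | ∑ j, Y j ω ≤ t}).toReal
      ≤ exp (N / t * t) * (r / (r + N / t)) ^ N := hchernoff
    _ ≤ exp 1 ^ N * (t * r / N) ^ N := by
        rw [div_mul_cancel₀ _ htpos.ne', exp_one_pow]
        gcongr
    _ = (exp 1 * t * r / N) ^ N := by rw [← mul_pow]; ring

/-- **Small-ball bound for sums of i.i.d. exponentials**: if `Y₁, …, Y_N` are i.i.d.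
exponential random variables with rate `μ > 0`, then for every `t ≥ 0`,
`P(∑ Yⱼ ≤ t) ≤ (e t μ / N)^N`. -/
theorem exp_sum_small_ball
    {Ω : Type*} [MeasurableSpace Ω] (P : Measure Ω) [IsProbabilityMeasure P]
    (N : ℕ) (hN : 0 < N) (r : ℝ) (hr : 0 < r)
    (Y : Fin N → Ω → ℝ)
    (hmeas : ∀ j, Measurable (Y j))
    (hindep : iIndepFun Y P)
    (hdist : ∀ j, P.map (Y j) = expMeasure r)
    (t : ℝ) (ht : 0 ≤ t) :
    (P {ω | ∑ j, Y j ω ≤ t}).toReal ≤ (Real.exp 1 * t * r / N) ^ N :=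
  exp_sum_small_ball_general P N hN r hr Y hmeas hindep hdist t ht
end

section
/- Let Y_1, …, Y_N be independent and identically distributed exponential random variables with rate parameter 1. Then for every real t ≥ 1, P(Σ_{j=1}^N Y_j ≥ t·N) ≤ (1/t)·exp(−N·(t − 1 − log t)). -/
/-!
Integrating out one summand, the tails of a sum `S_n` of `n` independent rate-one exponentials
satisfy `P(S_{n+1} ≥ x) = ∫₀^∞ P(S_n ≥ x - y) e^{-y} dy`, and integrating term by term gives by
induction the Erlang tail `P(S_n ≥ x) = e^{-x} ∑_{k<n} x^k / k!` for `x > 0`. At `x = tN` with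
`t ≥ 1`, each term is at most `t^{N-1} N^k / k!` because `k ≤ N - 1`, and `∑_k N^k / k! ≤ e^N`;
so the tail is at most `e^{-tN} t^{N-1} e^N`, which is the claimed bound. Working with the exact
tail rather than a Chernoff bound is what produces the factor `1/t`.
-/

open MeasureTheory ProbabilityTheory Real Set
open scoped ENNReal Nat

noncomputable def expPartialSum (n : ℕ) (x : ℝ) : ℝ :=
  ∑ k ∈ Finset.range n, x ^ k / k !

noncomputable def erlangTail (n : ℕ) (x : ℝ) : ℝ :=
  if 0 < x then exp (-x) * expPartialSum n x else 1

@[fun_prop]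
lemma continuous_expPartialSum (n : ℕ) : Continuous (expPartialSum n) := by
  unfold expPartialSum
  fun_prop

lemma expPartialSum_nonneg (n : ℕ) {x : ℝ} (hx : 0 ≤ x) : 0 ≤ expPartialSum n x :=
  Finset.sum_nonneg fun k _ => by positivity

lemma one_le_expPartialSum_succ (n : ℕ) {x : ℝ} (hx : 0 ≤ x) : 1 ≤ expPartialSum (n + 1) x := by
  rw [expPartialSum, Finset.sum_range_succ']
  simp only [pow_zero, Nat.factorial_zero, Nat.cast_one, div_one]
  exact le_add_of_nonneg_left (Finset.sum_nonneg fun k _ => by positivity)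

lemma integral_expPartialSum (n : ℕ) (x : ℝ) :
    ∫ u in (0 : ℝ)..x, expPartialSum n u = expPartialSum (n + 1) x - 1 := by
  unfold expPartialSum
  rw [intervalIntegral.integral_finsetSum fun k _ =>
    ((continuous_pow k).div_const _).intervalIntegrable _ _, Finset.sum_range_succ', pow_zero,
    Nat.factorial_zero, Nat.cast_one, div_one, add_sub_cancel_right]
  refine Finset.sum_congr rfl fun k _ => ?_
  rw [intervalIntegral.integral_div, integral_pow, Nat.factorial_succ]
  push_cast
  field_simp
  simp

@[fun_prop]
lemma measurable_erlangTail (n : ℕ) : Measurable (erlangTail n) :=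
  Measurable.ite measurableSet_Ioi (by fun_prop) measurable_const

lemma erlangTail_nonneg (n : ℕ) (x : ℝ) : 0 ≤ erlangTail n x := by
  unfold erlangTail
  split_ifs with hx
  · exact mul_nonneg (exp_pos _).le (expPartialSum_nonneg n hx.le)
  · exact zero_le_one

lemma erlangTail_mul_le (n : ℕ) {s t : ℝ} (hs : 0 < s) (ht : 1 ≤ t) :
    erlangTail n (t * s) ≤ exp (-(t * s)) * (t ^ (n - 1) * exp s) := by
  rw [erlangTail, if_pos (by positivity)]
  gcongr
  calc expPartialSum n (t * s)
      ≤ ∑ k ∈ Finset.range n, t ^ (n - 1) * (s ^ k / k !) := by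
        refine Finset.sum_le_sum fun k hk => ?_
        rw [mul_pow, mul_div_assoc]
        gcongr
        exact Nat.le_pred_of_lt (Finset.mem_range.1 hk)
    _ ≤ t ^ (n - 1) * exp s := by
        rw [← Finset.mul_sum]
        gcongr
        exact sum_le_exp_of_nonneg hs.le n

lemma lintegral_Ici_ofReal_exp_neg (a : ℝ) :
    ∫⁻ y in Ici a, ENNReal.ofReal (exp (-y)) = ENNReal.ofReal (exp (-a)) := by
  have hint : IntegrableOn (fun y => exp (-y)) (Ioi a) := by
    simpa using exp_neg_integrableOn_Ioi a one_pos
  rw [← setLIntegral_congr Ioi_ae_eq_Ici, ← ofReal_integral_eq_lintegral_ofReal hint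
    (ae_of_all _ fun y => (exp_pos _).le), integral_exp_neg_Ioi]

lemma lintegral_expMeasure_one {f : ℝ → ℝ≥0∞} (hf : Measurable f) :
    ∫⁻ y, f y ∂expMeasure 1 = ∫⁻ y in Ici 0, ENNReal.ofReal (exp (-y)) * f y := by
  have hpdf : Measurable (exponentialPDF 1) := (measurable_exponentialPDFReal 1).ennreal_ofReal
  rw [show expMeasure 1 = volume.withDensity (exponentialPDF 1) from rfl,
    lintegral_withDensity_eq_lintegral_mul _ hpdf hf, ← lintegral_indicator measurableSet_Ici]
  congr 1
  ext y
  by_cases hy : 0 ≤ y <;> simp [exponentialPDF_eq, hy]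

lemma lintegral_Ico_exp_neg_mul_erlangTail_sub (n : ℕ) {x : ℝ} (hx : 0 < x) :
    ∫⁻ y in Ico 0 x, ENNReal.ofReal (exp (-y)) * ENNReal.ofReal (erlangTail n (x - y)) =
      ENNReal.ofReal (exp (-x) * (expPartialSum (n + 1) x - 1)) := by
  have hintegrand : EqOn
      (fun y => ENNReal.ofReal (exp (-y)) * ENNReal.ofReal (erlangTail n (x - y)))
      (fun y => ENNReal.ofReal (exp (-x) * expPartialSum n (x - y))) (Ico 0 x) := by
    intro y ⟨_, hyx⟩
    simp only [erlangTail, if_pos (sub_pos.2 hyx)]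
    rw [← ENNReal.ofReal_mul (exp_pos _).le, ← mul_assoc, ← exp_add]
    ring_nf
  have hint : IntegrableOn (fun y => exp (-x) * expPartialSum n (x - y)) (Ico 0 x) :=
    (Continuous.integrableOn_Icc (by fun_prop)).mono_set Ico_subset_Icc_self
  have hnonneg : ∀ᵐ y ∂volume.restrict (Ico 0 x), 0 ≤ exp (-x) * expPartialSum n (x - y) :=
    (ae_restrict_iff' measurableSet_Ico).2 <| ae_of_all _ fun y hy =>
      mul_nonneg (exp_pos _).le (expPartialSum_nonneg n (sub_nonneg.2 hy.2.le))
  rw [setLIntegral_congr_fun measurableSet_Ico hintegrand,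
    ← ofReal_integral_eq_lintegral_ofReal hint hnonneg, integral_Ico_eq_integral_Ioo,
    ← integral_Ioc_eq_integral_Ioo, ← intervalIntegral.integral_of_le hx.le,
    intervalIntegral.integral_const_mul, intervalIntegral.integral_comp_sub_left (expPartialSum n),
    sub_self, sub_zero, integral_expPartialSum]

lemma lintegral_erlangTail_sub_expMeasure (n : ℕ) (x : ℝ) :
    ∫⁻ y, ENNReal.ofReal (erlangTail n (x - y)) ∂expMeasure 1 =
      ENNReal.ofReal (erlangTail (n + 1) x) := by
  rw [lintegral_expMeasure_one (by fun_prop)]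
  by_cases hx : 0 < x
  · have hfar : EqOn (fun y => ENNReal.ofReal (exp (-y)) * ENNReal.ofReal (erlangTail n (x - y)))
        (fun y => ENNReal.ofReal (exp (-y))) (Ici x) := fun y (hy : x ≤ y) => by
      simp [erlangTail, not_lt.2 hy]
    rw [← Ico_union_Ici_eq_Ici hx.le,
      lintegral_union measurableSet_Ici ((Iio_disjoint_Ici le_rfl).mono_left Ico_subset_Iio_self),
      lintegral_Ico_exp_neg_mul_erlangTail_sub n hx, setLIntegral_congr_fun measurableSet_Ici hfar,
      lintegral_Ici_ofReal_exp_neg, ← ENNReal.ofReal_add, erlangTail, if_pos hx]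
    · congr 1
      ring
    · exact mul_nonneg (exp_pos _).le (sub_nonneg.2 (one_le_expPartialSum_succ n hx.le))
    · exact (exp_pos _).le
  · have hall : EqOn (fun y => ENNReal.ofReal (exp (-y)) * ENNReal.ofReal (erlangTail n (x - y)))
        (fun y => ENNReal.ofReal (exp (-y))) (Ici 0) := fun y (hy : 0 ≤ y) => by
      simp [erlangTail, not_lt.2 (by linarith : x - y ≤ 0)]
    rw [setLIntegral_congr_fun measurableSet_Ici hall, lintegral_Ici_ofReal_exp_neg, erlangTail,
      if_neg hx, neg_zero, exp_zero]

lemma measure_le_add_eq_lintegral {Ω : Type*} [MeasurableSpace Ω] (P : Measure Ω)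
    [IsFiniteMeasure P] {X Z : Ω → ℝ} (hX : Measurable X) (hZ : Measurable Z)
    (hXZ : IndepFun X Z P) (x : ℝ) :
    P {ω | x ≤ X ω + Z ω} = ∫⁻ y, P.map Z (Ici (x - y)) ∂P.map X := by
  have hmap : P.map (fun ω => (X ω, Z ω)) = (P.map X).prod (P.map Z) :=
    (indepFun_iff_map_prod_eq_prod_map_map hX.aemeasurable hZ.aemeasurable).1 hXZ
  have hs : MeasurableSet {p : ℝ × ℝ | x ≤ p.1 + p.2} :=
    measurableSet_le measurable_const (measurable_fst.add measurable_snd)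
  rw [← preimage_ofPred_eq (p := fun p : ℝ × ℝ => x ≤ p.1 + p.2) (f := fun ω => (X ω, Z ω)),
    ← Measure.map_apply (hX.prodMk hZ) hs, hmap, Measure.prod_apply hs]
  refine lintegral_congr fun y => ?_
  congr 1
  ext z
  simp [add_comm]

lemma measure_le_sum_eq_erlangTail {Ω ι : Type*} [MeasurableSpace Ω] (P : Measure Ω)
    [IsProbabilityMeasure P] {Y : ι → Ω → ℝ} (hmeas : ∀ j, Measurable (Y j))
    (hindep : iIndepFun Y P) (hdist : ∀ j, P.map (Y j) = expMeasure 1) (s : Finset ι) (x : ℝ) :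
    P {ω | x ≤ ∑ j ∈ s, Y j ω} = ENNReal.ofReal (erlangTail s.card x) := by
  induction s using Finset.cons_induction generalizing x with
  | empty =>
    by_cases hx : 0 < x
    · simp [erlangTail, hx, not_le.2 hx, expPartialSum]
    · simp [erlangTail, hx, not_lt.1 hx]
  | cons i s hi ih =>
    have hS : Measurable fun ω => ∑ j ∈ s, Y j ω := Finset.measurable_sum _ fun j _ => hmeas j
    have hindepS : IndepFun (Y i) (fun ω => ∑ j ∈ s, Y j ω) P := by
      have := (hindep.indepFun_finsetSum_of_notMem hmeas hi).symm
      rwa [Finset.sum_fn] at this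
    have htailS (u : ℝ) : P.map (fun ω => ∑ j ∈ s, Y j ω) (Ici u) =
        ENNReal.ofReal (erlangTail s.card u) := by
      rw [Measure.map_apply hS measurableSet_Ici]
      exact ih u
    simp only [Finset.sum_cons, Finset.card_cons]
    rw [measure_le_add_eq_lintegral P (hmeas i) hS hindepS, hdist i]
    simp only [htailS]
    exact lintegral_erlangTail_sub_expMeasure s.card x

/-- **Upper-tail bound for sums of i.i.d. rate-one exponentials**: if `Y₁, …, Y_N` are
i.i.d. exponential random variables with rate `1`, then for every real `t ≥ 1`,
`P(∑ Yⱼ ≥ t N) ≤ (1/t) exp(−N (t − 1 − log t))`. -/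
theorem exp_sum_upper_tail
    {Ω : Type*} [MeasurableSpace Ω] (P : Measure Ω) [IsProbabilityMeasure P]
    (N : ℕ) (hN : 0 < N)
    (Y : Fin N → Ω → ℝ)
    (hmeas : ∀ j, Measurable (Y j))
    (hindep : iIndepFun Y P)
    (hdist : ∀ j, P.map (Y j) = expMeasure 1)
    (t : ℝ) (ht : 1 ≤ t) :
    (P {ω | t * N ≤ ∑ j, Y j ω}).toReal ≤
      (1 / t) * Real.exp (-(N : ℝ) * (t - 1 - Real.log t)) := by
  have ht0 : 0 < t := one_pos.trans_le ht
  have htail := measure_le_sum_eq_erlangTail P hmeas hindep hdist Finset.univ (t * N)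
  rw [Finset.card_univ, Fintype.card_fin] at htail
  rw [htail, ENNReal.toReal_ofReal (erlangTail_nonneg _ _)]
  calc erlangTail N (t * N) ≤ exp (-(t * N)) * (t ^ (N - 1) * exp N) :=
        erlangTail_mul_le N (Nat.cast_pos.2 hN) ht
    _ = (1 / t) * exp (-(N : ℝ) * (t - 1 - log t)) := by
        have hinv : 1 / t = exp (-log t) := by rw [exp_neg, exp_log ht0, one_div]
        rw [← rpow_natCast, Nat.cast_sub hN, rpow_def_of_pos ht0, hinv, ← exp_add, ← exp_add,
          ← exp_add]
        congr 1
        push_cast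
        ring
end
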